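/- Let 0 < γ < 1 and define ν(ζ₁,ζ₂,τ) = ζ₁² E_γ(−τ^γ) for (ζ₁,ζ₂) ∈ ℝ² with ζ₁ ≠ 0 and τ ≥ 0. Then ν(ζ₁,ζ₂,0) = ζ₁², and for every such (ζ₁,ζ₂) and τ > 0, ν solves the two-dimensional nonlinear time-fractional Fokker–Planck equation D^γ_τ ν = −∂_{ζ₁}((4/ζ₁) ν²) − ∂_{ζ₂}(ζ₂ ν) + ∂²_{ζ₁ζ₁}(ν²) + ∂²_{ζ₁ζ₂} ν + ∂²_{ζ₂ζ₁} ν + ∂²_{ζ₂ζ₂} ν, where D^γ_τ is the Caputo time-fractional derivative. -/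

import Mathlib

/-!
Termwise, `E_γ(-t^γ) = 1 - Σ_m (-1)^m t^{(m+1)γ} / Γ((m+1)γ+1)`, and by the Beta integral the
Caputo derivative of `t^p / Γ(p+1)` is `t^{p-γ} / Γ(p-γ+1)`; so `D^γ` shifts the series by one
term and `D^γ E_γ(-t^γ) = -E_γ(-t^γ)`. Summing under the integral is justified because the
integrals of the absolute values of the terms are the terms of `Γ(1-γ) E_γ(τ^γ)`, which converges
by the ratio test since `Γ(t+γ) ≥ Γ(t) (t-1)^γ` (log-convexity of `Γ`). In space, for
`ν = ζ₁² c` the drift `-∂₁(4 c² ζ₁³)` cancels the diffusion `∂₁²(c² ζ₁⁴)`, the second derivatives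
involving `ζ₂` vanish, and `-∂₂(ζ₂ ν) = -ν`.
-/

open MeasureTheory Real Filter

/-- The Mittag-Leffler function `E_γ(x) = Σ_{n=0}^∞ x^n / Γ(nγ+1)`. -/
noncomputable def mittagLeffler (γ x : ℝ) : ℝ :=
  ∑' n : ℕ, x ^ n / Real.Gamma ((n : ℝ) * γ + 1)

theorem Real.Gamma_mul_rpow_le_Gamma_add {s t : ℝ} (hs : 0 < s) (ht : 1 < t) :
    Gamma t * (t - 1) ^ s ≤ Gamma (t + s) := by
  have ht₀ : 0 < t - 1 := by linarith
  have hrec : log (Gamma t) - log (Gamma (t - 1)) = log (t - 1) := by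
    rw [← sub_add_cancel t 1, Gamma_add_one ht₀.ne', add_sub_cancel_right,
      log_mul ht₀.ne' (Gamma_pos_of_pos ht₀).ne']
    ring
  have hslope := convexOn_log_Gamma.slope_mono_adjacent (x := t - 1) (y := t) (z := t + s)
    ht₀ (by simp only [Set.mem_Ioi]; linarith) (by linarith) (by linarith)
  simp only [Function.comp, sub_sub_cancel, add_sub_cancel_left, div_one, hrec] at hslope
  rw [le_div_iff₀ hs] at hslope
  calc Gamma t * (t - 1) ^ s = exp (log (Gamma t) + log (t - 1) * s) := by
        rw [exp_add, exp_log (Gamma_pos_of_pos (by linarith)), rpow_def_of_pos ht₀]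
    _ ≤ exp (log (Gamma (t + s))) := exp_le_exp.mpr (by linarith)
    _ = Gamma (t + s) := exp_log (Gamma_pos_of_pos (by linarith))

theorem summable_pow_div_Gamma_mul_add {γ a : ℝ} (hγ : 0 < γ) (ha : 0 < a) (x : ℝ) :
    Summable fun n : ℕ => x ^ n / Gamma (n * γ + a) := by
  have hlin : Tendsto (fun n : ℕ => (n : ℝ) * γ + a - 1) atTop atTop :=
    tendsto_atTop_add_const_right _ _
      (tendsto_atTop_add_const_right _ _ (tendsto_natCast_atTop_atTop.atTop_mul_const hγ))
  refine summable_of_ratio_norm_eventually_le (r := 1 / 2) (by norm_num) ?_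
  filter_upwards [hlin.eventually_ge_atTop 1,
    ((tendsto_rpow_atTop hγ).comp hlin).eventually_ge_atTop (2 * |x|)] with n hn hgrowth
  set t : ℝ := n * γ + a
  have hΓt : 0 < Gamma t := Gamma_pos_of_pos (by linarith)
  have hΓts : 0 < Gamma (t + γ) := Gamma_pos_of_pos (by linarith)
  have hratio : Gamma t * (2 * |x|) ≤ Gamma (t + γ) :=
    (mul_le_mul_of_nonneg_left hgrowth hΓt.le).trans
      (Gamma_mul_rpow_le_Gamma_add hγ (by linarith))
  have hcast : ((n + 1 : ℕ) : ℝ) * γ + a = t + γ := by push_cast; ring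
  rw [hcast, norm_div, norm_div, norm_pow, norm_pow, pow_succ, norm_of_nonneg hΓt.le,
    norm_of_nonneg hΓts.le, Real.norm_eq_abs, div_le_iff₀ hΓts]
  calc |x| ^ n * |x| = 1 / 2 * (|x| ^ n / Gamma t) * (Gamma t * (2 * |x|)) := by
        field_simp
    _ ≤ 1 / 2 * (|x| ^ n / Gamma t) * Gamma (t + γ) := by gcongr

theorem mittagLeffler_zero (γ : ℝ) : mittagLeffler γ 0 = 1 := by
  rw [mittagLeffler, tsum_eq_single 0 fun n hn => by simp [zero_pow hn]]
  simp

theorem hasSum_mittagLeffler_neg_rpow {γ z : ℝ} (hγ : 0 < γ) (hz : 0 ≤ z) :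
    HasSum (fun m : ℕ => (-1) ^ m * (z ^ ((m + 1) * γ) / Gamma ((m + 1) * γ + 1)))
      (1 - mittagLeffler γ (-z ^ γ)) := by
  have hseries := (summable_pow_div_Gamma_mul_add hγ one_pos (-z ^ γ)).hasSum
  rw [← hasSum_nat_add_iff' 1] at hseries
  have hterm : ∀ m : ℕ, (-1) ^ m * (z ^ ((m + 1) * γ) / Gamma ((m + 1) * γ + 1))
      = -((-z ^ γ) ^ (m + 1) / Gamma (((m + 1 : ℕ) : ℝ) * γ + 1)) := fun m => by
    rw [neg_pow (z ^ γ), ← rpow_natCast (z ^ γ), ← rpow_mul hz, pow_succ]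
    push_cast
    ring_nf
  simp only [hterm, Finset.range_one, Finset.sum_singleton] at hseries ⊢
  simpa [mittagLeffler] using hseries.neg

theorem hasDerivAt_rpow_div_Gamma {p z : ℝ} (hp : 0 < p) (hz : 0 < z) :
    HasDerivAt (fun z => z ^ p / Gamma (p + 1)) (z ^ (p - 1) / Gamma p) z := by
  refine ((hasDerivAt_rpow_const (p := p) (Or.inl hz.ne')).div_const _).congr_deriv ?_
  rw [Gamma_add_one hp.ne']
  field_simp [(Gamma_pos_of_pos hp).ne']

theorem rpow_sub_one_le_rpow_div {a b y p : ℝ} (ha : 0 < a) (hy : y ∈ Set.Icc a b) (hp : 0 ≤ p) :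
    y ^ (p - 1) ≤ b ^ p / a := by
  have hy₀ : 0 < y := ha.trans_le hy.1
  rw [rpow_sub_one hy₀.ne']
  exact div_le_div₀ (rpow_nonneg (hy₀.le.trans hy.2) p) (rpow_le_rpow hy₀.le hy.2 hp) ha hy.1

theorem hasDerivAt_mittagLeffler_neg_rpow {γ ρ : ℝ} (hγ : 0 < γ) (hρ : 0 < ρ) :
    HasDerivAt (fun z => mittagLeffler γ (-z ^ γ))
      (-∑' m : ℕ, (-1) ^ m * (ρ ^ ((m + 1) * γ - 1) / Gamma ((m + 1) * γ))) ρ := by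
  set K := (2 * ρ) ^ γ
  have hbound : ∀ (m : ℕ), ∀ y ∈ Set.Ioo (ρ / 2) (2 * ρ),
      ‖(-1) ^ m * (y ^ ((m + 1) * γ - 1) / Gamma ((m + 1) * γ))‖
        ≤ K * (K ^ m / Gamma (m * γ + γ)) / (ρ / 2) := by
    intro m y hy
    have hy₀ : 0 < y := (half_pos hρ).trans hy.1
    have hp : 0 < ((m : ℝ) + 1) * γ := by positivity
    have hpow : (2 * ρ) ^ (((m : ℝ) + 1) * γ) = K * K ^ m := by
      rw [mul_comm _ γ, rpow_mul (by positivity), ← pow_succ', ← rpow_natCast]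
      push_cast
      rfl
    rw [norm_mul, norm_pow, norm_neg, norm_one, one_pow, one_mul,
      norm_of_nonneg (by have := Gamma_pos_of_pos hp; positivity)]
    calc y ^ ((m + 1) * γ - 1) / Gamma ((m + 1) * γ)
        ≤ (2 * ρ) ^ (((m : ℝ) + 1) * γ) / (ρ / 2) / Gamma ((m + 1) * γ) := by
          gcongr
          exact rpow_sub_one_le_rpow_div (half_pos hρ) (Set.Ioo_subset_Icc_self hy) hp.le
      _ = K * (K ^ m / Gamma (m * γ + γ)) / (ρ / 2) := by
          rw [hpow, add_one_mul]
          ring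
  have hsummable : Summable fun m : ℕ => K * (K ^ m / Gamma (m * γ + γ)) / (ρ / 2) :=
    ((summable_pow_div_Gamma_mul_add hγ hγ K).mul_left K).div_const _
  have hρmem : ρ ∈ Set.Ioo (ρ / 2) (2 * ρ) := ⟨by linarith, by linarith⟩
  have hseries := hasDerivAt_tsum_of_isPreconnected
    (g := fun (m : ℕ) z => (-1) ^ m * (z ^ ((m + 1) * γ) / Gamma ((m + 1) * γ + 1)))
    hsummable isOpen_Ioo (convex_Ioo _ _).isPreconnected
    (fun m y hy =>
      (hasDerivAt_rpow_div_Gamma (by positivity) ((half_pos hρ).trans hy.1)).const_mul _)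
    hbound hρmem (hasSum_mittagLeffler_neg_rpow hγ hρ.le).summable hρmem
  refine ((hasDerivAt_const ρ (1 : ℝ)).sub hseries).congr_of_eventuallyEq ?_ |>.congr_deriv
    (zero_sub _)
  filter_upwards [Ioi_mem_nhds hρ] with z hz
  rw [Pi.sub_apply, (hasSum_mittagLeffler_neg_rpow hγ (le_of_lt hz)).tsum_eq]
  ring

theorem integral_rpow_mul_sub_rpow {a b τ : ℝ} (ha : 0 < a) (hb : 0 < b) (hτ : 0 < τ) :
    ∫ ρ in (0 : ℝ)..τ, ρ ^ (a - 1) * (τ - ρ) ^ (b - 1)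
      = τ ^ (a + b - 1) * (Gamma a * Gamma b / Gamma (a + b)) := by
  have hbeta : Complex.betaIntegral a b
      = Complex.Gamma a * Complex.Gamma b / Complex.Gamma (a + b) := by
    rw [Complex.Gamma_mul_Gamma_eq_betaIntegral (by simpa using ha) (by simpa using hb),
      mul_div_cancel_left₀]
    exact_mod_cast Complex.Gamma_ofReal (a + b) ▸ Complex.ofReal_ne_zero.mpr
      (Gamma_pos_of_pos (add_pos ha hb)).ne'
  have hscaled := Complex.betaIntegral_scaled a b hτ
  apply Complex.ofReal_injective
  rw [← intervalIntegral.integral_ofReal]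
  convert hscaled using 1
  · refine intervalIntegral.integral_congr fun ρ hρ => ?_
    rw [Set.uIcc_of_le hτ.le] at hρ
    rw [Complex.ofReal_mul, Complex.ofReal_cpow hρ.1, Complex.ofReal_cpow (sub_nonneg.2 hρ.2)]
    push_cast
    rfl
  · rw [hbeta, Complex.ofReal_mul, Complex.ofReal_cpow hτ.le]
    push_cast
    simp only [← Complex.ofReal_add, Complex.Gamma_ofReal]

theorem intervalIntegrable_rpow_mul_sub_rpow {a b τ : ℝ} (ha : 0 < a) (hb : 0 < b) (hτ : 0 < τ) :
    IntervalIntegrable (fun ρ => ρ ^ (a - 1) * (τ - ρ) ^ (b - 1)) volume 0 τ := by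
  -- a non-integrable function has integral `0`, while the Beta value is positive
  refine intervalIntegral.intervalIntegrable_of_integral_ne_zero ?_
  rw [integral_rpow_mul_sub_rpow ha hb hτ]
  have := Gamma_pos_of_pos ha
  have := Gamma_pos_of_pos hb
  have := Gamma_pos_of_pos (add_pos ha hb)
  positivity

noncomputable def caputoDeriv (γ : ℝ) (f : ℝ → ℝ) (τ : ℝ) : ℝ :=
  1 / Gamma (1 - γ) * ∫ ρ in (0 : ℝ)..τ, deriv f ρ * (τ - ρ) ^ (-γ)

theorem caputoDeriv_const_mul (γ c : ℝ) (f : ℝ → ℝ) (τ : ℝ) :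
    caputoDeriv γ (fun t => c * f t) τ = c * caputoDeriv γ f τ := by
  simp only [caputoDeriv, deriv_const_mul_field', mul_assoc, intervalIntegral.integral_const_mul]
  ring

theorem integral_rpow_div_Gamma_mul_sub_rpow {p γ τ : ℝ} (hp : 0 < p) (hγ : γ < 1) (hτ : 0 < τ) :
    ∫ ρ in (0 : ℝ)..τ, ρ ^ (p - 1) / Gamma p * (τ - ρ) ^ (-γ)
      = Gamma (1 - γ) * (τ ^ (p - γ) / Gamma (p - γ + 1)) := by
  have hbeta := integral_rpow_mul_sub_rpow hp (sub_pos.2 hγ) hτ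
  simp only [sub_sub_cancel_left, show p + (1 - γ) = p - γ + 1 by ring,
    show p - γ + 1 - 1 = p - γ by ring] at hbeta
  simp only [div_mul_eq_mul_div, intervalIntegral.integral_div, hbeta]
  field_simp [(Gamma_pos_of_pos hp).ne']

theorem caputoDeriv_mittagLeffler_neg_rpow {γ τ : ℝ} (hγ0 : 0 < γ) (hγ1 : γ < 1) (hτ : 0 < τ) :
    caputoDeriv γ (fun t => mittagLeffler γ (-t ^ γ)) τ = -mittagLeffler γ (-τ ^ γ) := by
  set G : ℕ → ℝ → ℝ := fun m ρ => ρ ^ ((m + 1) * γ - 1) / Gamma ((m + 1) * γ) * (τ - ρ) ^ (-γ)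
  have hp : ∀ m : ℕ, 0 < ((m : ℝ) + 1) * γ := fun m => by positivity
  have hGint : ∀ m, IntegrableOn (G m) (Set.Ioc 0 τ) := fun m => by
    have h := intervalIntegrable_rpow_mul_sub_rpow (hp m) (sub_pos.2 hγ1) hτ
    rw [sub_sub_cancel_left] at h
    simpa only [G, div_mul_eq_mul_div] using (h.div_const (Gamma ((m + 1) * γ))).1
  have hGval : ∀ m : ℕ,
      ∫ ρ in Set.Ioc 0 τ, G m ρ = Gamma (1 - γ) * ((τ ^ γ) ^ m / Gamma (m * γ + 1)) := by
    intro m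
    rw [← intervalIntegral.integral_of_le hτ.le,
      integral_rpow_div_Gamma_mul_sub_rpow (hp m) hγ1 hτ, ← rpow_natCast, ← rpow_mul hτ.le]
    ring_nf
  have hGnonneg : ∀ m, ∀ ρ ∈ Set.Ioc 0 τ, 0 ≤ G m ρ := fun m ρ hρ => by
    have := Gamma_pos_of_pos (hp m)
    have := sub_nonneg.2 hρ.2
    have := hρ.1
    positivity
  have hintegrand :
      ∫ ρ in Set.Ioc 0 τ, deriv (fun t => mittagLeffler γ (-t ^ γ)) ρ * (τ - ρ) ^ (-γ)
        = ∫ ρ in Set.Ioc 0 τ, -∑' m : ℕ, (-1) ^ m * G m ρ := by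
    refine setIntegral_congr_fun measurableSet_Ioc fun ρ hρ => ?_
    rw [(hasDerivAt_mittagLeffler_neg_rpow hγ0 hρ.1).deriv, neg_mul, ← tsum_mul_right]
    simp only [G, mul_assoc]
  have hnorm : ∀ m : ℕ, ∫ ρ in Set.Ioc 0 τ, ‖(-1) ^ m * G m ρ‖ = ∫ ρ in Set.Ioc 0 τ, G m ρ :=
    fun m => setIntegral_congr_fun measurableSet_Ioc fun ρ hρ => by
      rw [norm_mul, norm_pow, norm_neg, norm_one, one_pow, one_mul,
        norm_of_nonneg (hGnonneg m ρ hρ)]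
  have hsummable : Summable fun m : ℕ => ∫ ρ in Set.Ioc 0 τ, ‖(-1) ^ m * G m ρ‖ := by
    simp only [hnorm, hGval]
    exact (summable_pow_div_Gamma_mul_add hγ0 one_pos _).mul_left _
  rw [caputoDeriv, intervalIntegral.integral_of_le hτ.le, hintegrand, integral_neg,
    ← integral_tsum_of_summable_integral_norm (fun m => (hGint m).const_mul _) hsummable]
  simp only [integral_const_mul, hGval, mittagLeffler, neg_pow (τ ^ γ),
    mul_left_comm _ (Gamma _), tsum_mul_left, mul_div_assoc]
  field_simp [(Gamma_pos_of_pos (sub_pos.2 hγ1)).ne']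

noncomputable def fokkerPlanckOperator (u : ℝ → ℝ → ℝ) (ζ₁ ζ₂ : ℝ) : ℝ :=
  -(deriv (fun z => 4 / z * (u z ζ₂) ^ 2) ζ₁)
    - deriv (fun z => z * u ζ₁ z) ζ₂
    + deriv (deriv fun z => (u z ζ₂) ^ 2) ζ₁
    + deriv (fun z₁ => deriv (fun z₂ => u z₁ z₂) ζ₂) ζ₁
    + deriv (fun z₂ => deriv (fun z₁ => u z₁ z₂) ζ₁) ζ₂
    + deriv (deriv fun z => u ζ₁ z) ζ₂

theorem fokkerPlanckOperator_sq_mul (c ζ₁ ζ₂ : ℝ) :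
    fokkerPlanckOperator (fun z₁ _ => z₁ ^ 2 * c) ζ₁ ζ₂ = -(ζ₁ ^ 2 * c) := by
  have hdrift : (fun z : ℝ => 4 / z * (z ^ 2 * c) ^ 2) = fun z => 4 * c ^ 2 * z ^ 3 := by
    funext z
    rcases eq_or_ne z 0 with rfl | hz
    · simp
    · field_simp
  have hdiffusion : (fun z : ℝ => (z ^ 2 * c) ^ 2) = fun z => c ^ 2 * z ^ 4 := by
    funext z
    ring
  simp only [fokkerPlanckOperator, hdrift, hdiffusion, deriv_const_mul_field', deriv_pow_field,
    deriv_mul_const_field', deriv_id'', deriv_const']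
  ring

/-- The function `ν(ζ₁,ζ₂,τ) = ζ₁² E_γ(−τ^γ)` satisfies `ν(ζ₁,ζ₂,0) = ζ₁²` and, for
`ζ₁ ≠ 0`, solves the two-dimensional nonlinear time-fractional Fokker–Planck equation
`D^γ_τ ν = −∂_{ζ₁}((4/ζ₁)ν²) − ∂_{ζ₂}(ζ₂ν) + ∂²_{ζ₁ζ₁}(ν²) + ∂²_{ζ₁ζ₂}ν + ∂²_{ζ₂ζ₁}ν + ∂²_{ζ₂ζ₂}ν`
for `τ > 0`, where `D^γ_τ` is the Caputo time-fractional derivative. -/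
theorem tffpe_example5 (γ : ℝ) (hγ0 : 0 < γ) (hγ1 : γ < 1)
    (ν : ℝ → ℝ → ℝ → ℝ) (hν : ν = fun ζ₁ ζ₂ τ => ζ₁ ^ 2 * mittagLeffler γ (-τ ^ γ)) :
    (∀ ζ₁ ζ₂ : ℝ, ζ₁ ≠ 0 → ν ζ₁ ζ₂ 0 = ζ₁ ^ 2) ∧
    ∀ (ζ₁ ζ₂ τ : ℝ), ζ₁ ≠ 0 → 0 < τ →
      (1 / Real.Gamma (1 - γ)) *
          (∫ ρ in (0:ℝ)..τ, deriv (fun ρ => ν ζ₁ ζ₂ ρ) ρ * (τ - ρ) ^ (-γ))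
        = -(deriv (fun z => 4 / z * (ν z ζ₂ τ) ^ 2) ζ₁)
          - deriv (fun z => z * ν ζ₁ z τ) ζ₂
          + deriv (deriv fun z => (ν z ζ₂ τ) ^ 2) ζ₁
          + deriv (fun z₁ => deriv (fun z₂ => ν z₁ z₂ τ) ζ₂) ζ₁
          + deriv (fun z₂ => deriv (fun z₁ => ν z₁ z₂ τ) ζ₁) ζ₂
          + deriv (deriv fun z => ν ζ₁ z τ) ζ₂ := by
  subst hν
  refine ⟨fun ζ₁ _ _ => by simp [zero_rpow hγ0.ne', mittagLeffler_zero], fun ζ₁ ζ₂ τ _ hτ => ?_⟩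
  change caputoDeriv γ (fun t => ζ₁ ^ 2 * mittagLeffler γ (-t ^ γ)) τ
    = fokkerPlanckOperator (fun z₁ _ => z₁ ^ 2 * mittagLeffler γ (-τ ^ γ)) ζ₁ ζ₂
  rw [caputoDeriv_const_mul, caputoDeriv_mittagLeffler_neg_rpow hγ0 hγ1 hτ,
    fokkerPlanckOperator_sq_mul]
  ring
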